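/- Let n be a positive natural number. Let Kp and Kv be symmetric positive definite real n×n matrices and set Δ = Kv⁻¹ Kp. Let M : ℝ → Matrix n n ℝ be differentiable with M(t) symmetric for every t, and suppose there exist constants 0 < m ≤ m̄ such that m‖v‖² ≤ vᵀ M(t) v ≤ m̄‖v‖² for all t ∈ ℝ and v ∈ ℝⁿ. Let C : ℝ → Matrix n n ℝ satisfy M′(t) = C(t) + C(t)ᵀ for all t. Let e : ℝ → ℝⁿ be twice differentiable and satisfy the closed-loop equation M(t)(e″(t) + Δ e′(t)) + C(t)(e′(t) + Δ e(t)) + Kv e′(t) + Kp e(t) = 0 for all t. Then e(t) → 0 and e′(t) → 0 as t → ∞; in particular the origin (e, e′) = (0, 0) is globally asymptotically stable. -/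

import Mathlib

open Matrix Filter Topology Metric

/-! With the sliding variable `s = e' + Δ e` the closed loop reads `M s' + C s + Kv s = 0`.
Along trajectories the Lyapunov function `V = sᵀ M s + eᵀ Kp e` satisfies
`V' = -(e'ᵀ Kv e' + sᵀ Kv s + (Δ e)ᵀ Kv (Δ e))`, since `M' = C + Cᵀ` cancels the Coriolis terms.
Positive definite quadratic forms are comparable (compactness of the unit sphere), so with the
uniform bound `M ≤ m̄` this gives `V' ≤ -c V`: `V` decays exponentially. As `V` dominates `‖s‖²`
and `‖e‖²`, both `e` and `e' = s - Δ e` tend to zero. -/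

theorem exists_pos_mul_le_of_homogeneous {E : Type*} [NormedAddCommGroup E] [NormedSpace ℝ E]
    [ProperSpace E] {p q : E → ℝ} (hp : Continuous p) (hq : Continuous q)
    (hp_smul : ∀ (a : ℝ) v, p (a • v) = a ^ 2 * p v)
    (hq_smul : ∀ (a : ℝ) v, q (a • v) = a ^ 2 * q v) (hq_pos : ∀ v ≠ 0, 0 < q v) :
    ∃ c > 0, ∀ v, c * p v ≤ q v := by
  suffices h : ∃ c > 0, ∀ u ∈ sphere (0 : E) 1, c * p u ≤ q u by
    obtain ⟨c, hc, hsphere⟩ := h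
    refine ⟨c, hc, fun v => ?_⟩
    rcases eq_or_ne v 0 with rfl | hv
    · have hp₀ : p 0 = 0 := by simpa using hp_smul 0 0
      have hq₀ : q 0 = 0 := by simpa using hq_smul 0 0
      simp [hp₀, hq₀]
    have hnorm : ‖v‖ ≠ 0 := norm_ne_zero_iff.2 hv
    have hv_eq : v = ‖v‖ • (‖v‖⁻¹ • v) := by rw [smul_smul, mul_inv_cancel₀ hnorm, one_smul]
    have hu : ‖v‖⁻¹ • v ∈ sphere (0 : E) 1 := by simp [norm_smul, inv_mul_cancel₀ hnorm]
    rw [hv_eq, hp_smul, hq_smul, mul_left_comm]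
    exact mul_le_mul_of_nonneg_left (hsphere _ hu) (sq_nonneg _)
  rcases (sphere (0 : E) 1).eq_empty_or_nonempty with hempty | hne
  · exact ⟨1, one_pos, by simp [hempty]⟩
  obtain ⟨u₀, hu₀, hmin⟩ := (isCompact_sphere (0 : E) 1).exists_isMinOn hne hq.continuousOn
  obtain ⟨u₁, -, hmax⟩ := (isCompact_sphere (0 : E) 1).exists_isMaxOn hne hp.continuousOn
  have hq₀ : 0 < q u₀ := hq_pos u₀ (ne_zero_of_mem_unit_sphere ⟨u₀, hu₀⟩)
  have hP : 0 < max (p u₁) 1 := lt_max_of_lt_right one_pos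
  refine ⟨q u₀ / max (p u₁) 1, div_pos hq₀ hP, fun u hu => ?_⟩
  calc q u₀ / max (p u₁) 1 * p u ≤ q u₀ / max (p u₁) 1 * max (p u₁) 1 :=
        mul_le_mul_of_nonneg_left ((hmax hu).trans (le_max_left _ _)) (div_pos hq₀ hP).le
    _ = q u₀ := div_mul_cancel₀ _ hP.ne'
    _ ≤ q u := hmin hu

theorem le_mul_exp_neg_of_hasDerivAt_le_neg_mul {V V' : ℝ → ℝ} {c : ℝ}
    (hV : ∀ t, HasDerivAt V (V' t) t) (hV' : ∀ t, V' t ≤ -(c * V t)) {t : ℝ} (ht : 0 ≤ t) :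
    V t ≤ V 0 * Real.exp (-(c * t)) := by
  have hanti : Antitone fun u => V u * Real.exp (c * u) := by
    refine antitone_of_hasDerivAt_nonpos
      (fun u => (hV u).mul ((hasDerivAt_id' u).const_mul c).exp) fun u => ?_
    have hV'u := hV' u
    have hexp := Real.exp_pos (c * u)
    simp only [Pi.zero_apply]
    nlinarith
  rw [Real.exp_neg, ← div_eq_mul_inv, le_div_iff₀ (Real.exp_pos _)]
  simpa using hanti ht

theorem tendsto_atTop_zero_of_hasDerivAt_le_neg_mul {V V' : ℝ → ℝ} {c : ℝ} (hc : 0 < c)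
    (hV_nonneg : ∀ t, 0 ≤ V t) (hV : ∀ t, HasDerivAt V (V' t) t)
    (hV' : ∀ t, V' t ≤ -(c * V t)) : Tendsto V atTop (𝓝 0) := by
  have hexp : Tendsto (fun t => V 0 * Real.exp (-(c * t))) atTop (𝓝 0) := by
    simpa using (Real.tendsto_exp_neg_atTop_nhds_zero.comp
      (tendsto_id.const_mul_atTop hc)).const_mul (V 0)
  refine squeeze_zero' (.of_forall hV_nonneg) ?_ hexp
  filter_upwards [eventually_ge_atTop 0] with t ht
  exact le_mul_exp_neg_of_hasDerivAt_le_neg_mul hV hV' ht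

theorem tendsto_zero_of_mul_norm_sq_le {α E : Type*} [SeminormedAddCommGroup E] {l : Filter α}
    {f : α → E} {g : α → ℝ} {c : ℝ} (hc : 0 < c) (hfg : ∀ x, c * ‖f x‖ ^ 2 ≤ g x)
    (hg : Tendsto g l (𝓝 0)) : Tendsto f l (𝓝 0) := by
  refine squeeze_zero_norm (fun x => ?_) (by simpa using (hg.div_const c).sqrt)
  have hg_nonneg : 0 ≤ g x / c :=
    div_nonneg ((by positivity : 0 ≤ c * ‖f x‖ ^ 2).trans (hfg x)) hc.le
  rw [Real.le_sqrt (norm_nonneg _) hg_nonneg, le_div_iff₀ hc, mul_comm]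
  exact hfg x

variable {ι : Type*} [Fintype ι]

theorem Matrix.IsSymm.dotProduct_mulVec_comm {A : Matrix ι ι ℝ} (hA : A.IsSymm) (v w : ι → ℝ) :
    v ⬝ᵥ (A *ᵥ w) = w ⬝ᵥ (A *ᵥ v) := by
  rw [← hA.eq, dotProduct_transpose_mulVec, hA.eq]

theorem Matrix.dotProduct_mulVec_smul_self (B : Matrix ι ι ℝ) (a : ℝ) (v : ι → ℝ) :
    (a • v) ⬝ᵥ (B *ᵥ (a • v)) = a ^ 2 * (v ⬝ᵥ (B *ᵥ v)) := by
  simp only [mulVec_smul, dotProduct_smul, smul_dotProduct, smul_eq_mul]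
  ring

namespace Matrix.PosDef

variable {A : Matrix ι ι ℝ}

theorem exists_pos_mul_le (hA : A.PosDef) {p : (ι → ℝ) → ℝ} (hp : Continuous p)
    (hp_smul : ∀ (a : ℝ) v, p (a • v) = a ^ 2 * p v) :
    ∃ c > 0, ∀ v, c * p v ≤ v ⬝ᵥ (A *ᵥ v) :=
  exists_pos_mul_le_of_homogeneous hp (by fun_prop) hp_smul A.dotProduct_mulVec_smul_self
    fun _ hv => by simpa using hA.dotProduct_mulVec_pos hv

theorem exists_pos_mul_dotProduct_mulVec_le (hA : A.PosDef) (B : Matrix ι ι ℝ) :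
    ∃ c > 0, ∀ v, c * (v ⬝ᵥ (B *ᵥ v)) ≤ v ⬝ᵥ (A *ᵥ v) :=
  hA.exists_pos_mul_le (by fun_prop) B.dotProduct_mulVec_smul_self

theorem exists_pos_mul_norm_sq_le (hA : A.PosDef) :
    ∃ c > 0, ∀ v, c * ‖v‖ ^ 2 ≤ v ⬝ᵥ (A *ᵥ v) :=
  hA.exists_pos_mul_le (by fun_prop) fun a v => by
    rw [norm_smul, mul_pow, Real.norm_eq_abs, sq_abs]

end Matrix.PosDef

theorem HasDerivAt.const_mulVec (A : Matrix ι ι ℝ) {s : ℝ → ι → ℝ} {s' : ι → ℝ} {t : ℝ}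
    (hs : HasDerivAt s s' t) : HasDerivAt (fun u => A *ᵥ s u) (A *ᵥ s') t :=
  A.mulVecLin.toContinuousLinearMap.hasFDerivAt.comp_hasDerivAt t hs

theorem HasDerivAt.dotProduct_mulVec_self {M : ℝ → Matrix ι ι ℝ} {M' : Matrix ι ι ℝ}
    {s : ℝ → ι → ℝ} {s' : ι → ℝ} {t : ℝ}
    (hM : ∀ i j, HasDerivAt (fun u => M u i j) (M' i j) t) (hs : HasDerivAt s s' t) :
    HasDerivAt (fun u => s u ⬝ᵥ (M u *ᵥ s u))
      (s' ⬝ᵥ (M t *ᵥ s t) + s t ⬝ᵥ (M' *ᵥ s t) + s t ⬝ᵥ (M t *ᵥ s')) t := by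
  have hs_i := hasDerivAt_pi.1 hs
  refine (HasDerivAt.fun_sum (u := Finset.univ) fun i _ => (hs_i i).fun_mul
    (HasDerivAt.fun_sum (u := Finset.univ) fun j _ => (hM i j).fun_mul (hs_i j))).congr_deriv ?_
  simp only [dotProduct, mulVec, Finset.mul_sum, ← Finset.sum_add_distrib]
  refine Finset.sum_congr rfl fun i _ => Finset.sum_congr rfl fun j _ => ?_
  ring

theorem closedLoop_lyapunov_deriv_eq {Kp Kv Δ M M' C : Matrix ι ι ℝ} (hKp : Kp.IsSymm)
    (hKv : Kv.IsSymm) (hM : M.IsSymm) (hKvΔ : Kv * Δ = Kp) (hMC : M' = C + Cᵀ)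
    {e e' s s' : ι → ℝ} (hs : s = e' + Δ *ᵥ e) (hloop : M *ᵥ s' + C *ᵥ s + Kv *ᵥ s = 0) :
    s' ⬝ᵥ (M *ᵥ s) + s ⬝ᵥ (M' *ᵥ s) + s ⬝ᵥ (M *ᵥ s')
        + (e' ⬝ᵥ (Kp *ᵥ e) + e ⬝ᵥ (Kp *ᵥ e')) =
      -(e' ⬝ᵥ (Kv *ᵥ e') + s ⬝ᵥ (Kv *ᵥ s) + e ⬝ᵥ ((Δᵀ * Kv * Δ) *ᵥ e)) := by
  have hMs' : s ⬝ᵥ (M *ᵥ s') = -(s ⬝ᵥ (C *ᵥ s)) - s ⬝ᵥ (Kv *ᵥ s) := by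
    rw [show M *ᵥ s' = -(C *ᵥ s) - Kv *ᵥ s by linear_combination hloop, dotProduct_sub,
      dotProduct_neg]
  have hM's : s ⬝ᵥ (M' *ᵥ s) = 2 * (s ⬝ᵥ (C *ᵥ s)) := by
    rw [hMC, add_mulVec, dotProduct_add, dotProduct_transpose_mulVec]
    ring
  have hKp_e : e' ⬝ᵥ (Kp *ᵥ e) = e' ⬝ᵥ (Kv *ᵥ (Δ *ᵥ e)) := by rw [mulVec_mulVec, hKvΔ]
  have hQ : e ⬝ᵥ ((Δᵀ * Kv * Δ) *ᵥ e) = (Δ *ᵥ e) ⬝ᵥ (Kv *ᵥ (Δ *ᵥ e)) := by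
    rw [← mulVec_mulVec, ← mulVec_mulVec, dotProduct_transpose_mulVec, dotProduct_comm]
  have hss : s ⬝ᵥ (Kv *ᵥ s) = e' ⬝ᵥ (Kv *ᵥ e') + 2 * (e' ⬝ᵥ (Kv *ᵥ (Δ *ᵥ e)))
      + (Δ *ᵥ e) ⬝ᵥ (Kv *ᵥ (Δ *ᵥ e)) := by
    rw [hs, mulVec_add, dotProduct_add, add_dotProduct, add_dotProduct,
      hKv.dotProduct_mulVec_comm (Δ *ᵥ e) e']
    ring
  rw [hM.dotProduct_mulVec_comm s', hKp.dotProduct_mulVec_comm e, hMs', hM's, hKp_e, hQ, hss]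
  ring

theorem hasDerivAt_closedLoop_lyapunov {Kp Kv Δ : Matrix ι ι ℝ} {M M' C : ℝ → Matrix ι ι ℝ}
    {e e' e'' : ℝ → ι → ℝ} (hKp : Kp.IsSymm) (hKv : Kv.IsSymm) (hKvΔ : Kv * Δ = Kp)
    (hMdiff : ∀ i j t, HasDerivAt (fun u => M u i j) (M' t i j) t)
    (hMsymm : ∀ t, (M t).IsSymm) (hMC : ∀ t, M' t = C t + (C t)ᵀ)
    (he : ∀ i t, HasDerivAt (fun u => e u i) (e' t i) t)
    (he' : ∀ i t, HasDerivAt (fun u => e' u i) (e'' t i) t)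
    (hloop : ∀ t, M t *ᵥ (e'' t + Δ *ᵥ e' t) + C t *ᵥ (e' t + Δ *ᵥ e t)
      + Kv *ᵥ e' t + Kp *ᵥ e t = 0) (t : ℝ) :
    HasDerivAt
      (fun u => (e' u + Δ *ᵥ e u) ⬝ᵥ (M u *ᵥ (e' u + Δ *ᵥ e u)) + e u ⬝ᵥ (Kp *ᵥ e u))
      (-(e' t ⬝ᵥ (Kv *ᵥ e' t) + (e' t + Δ *ᵥ e t) ⬝ᵥ (Kv *ᵥ (e' t + Δ *ᵥ e t))
        + e t ⬝ᵥ ((Δᵀ * Kv * Δ) *ᵥ e t))) t := by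
  have he_t : HasDerivAt e (e' t) t := hasDerivAt_pi.2 fun i => he i t
  have hs_t : HasDerivAt (fun u => e' u + Δ *ᵥ e u) (e'' t + Δ *ᵥ e' t) t :=
    (hasDerivAt_pi.2 fun i => he' i t).add (he_t.const_mulVec Δ)
  have hKp_t : ∀ i j, HasDerivAt (fun _ => Kp i j) ((0 : Matrix ι ι ℝ) i j) t :=
    fun i j => hasDerivAt_const t (Kp i j)
  refine ((hs_t.dotProduct_mulVec_self (hMdiff · · t)).add
    (he_t.dotProduct_mulVec_self hKp_t)).congr_deriv ?_
  rw [zero_mulVec, dotProduct_zero, add_zero]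
  refine closedLoop_lyapunov_deriv_eq hKp hKv (hMsymm t) hKvΔ (hMC t) rfl ?_
  simpa only [mulVec_add, mulVec_mulVec, hKvΔ, add_assoc] using hloop t

theorem exists_pos_mul_lyapunov_le [DecidableEq ι] {Kp Kv Q : Matrix ι ι ℝ}
    (hKp : Kp.PosSemidef) (hKv : Kv.PosDef) (hQ : Q.PosDef) {mbar : ℝ} (hmbar : 0 < mbar) :
    ∃ c > 0, ∀ M : Matrix ι ι ℝ, (∀ v, v ⬝ᵥ (M *ᵥ v) ≤ mbar * (v ⬝ᵥ v)) → ∀ e' s e : ι → ℝ,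
      c * (s ⬝ᵥ (M *ᵥ s) + e ⬝ᵥ (Kp *ᵥ e)) ≤
        e' ⬝ᵥ (Kv *ᵥ e') + s ⬝ᵥ (Kv *ᵥ s) + e ⬝ᵥ (Q *ᵥ e) := by
  obtain ⟨c₁, hc₁, hKv_le⟩ := hKv.exists_pos_mul_dotProduct_mulVec_le 1
  obtain ⟨c₂, hc₂, hQ_le⟩ := hQ.exists_pos_mul_dotProduct_mulVec_le Kp
  set c := min (c₁ / mbar) c₂
  have hc : 0 < c := lt_min (div_pos hc₁ hmbar) hc₂
  refine ⟨c, hc, fun M hM e' s e => ?_⟩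
  have hss : 0 ≤ s ⬝ᵥ s := by simpa using dotProduct_self_star_nonneg s
  have hs : c * (s ⬝ᵥ (M *ᵥ s)) ≤ s ⬝ᵥ (Kv *ᵥ s) := calc
    _ ≤ c * (mbar * (s ⬝ᵥ s)) := mul_le_mul_of_nonneg_left (hM s) hc.le
    _ ≤ c₁ / mbar * (mbar * (s ⬝ᵥ s)) :=
      mul_le_mul_of_nonneg_right (min_le_left _ _) (mul_nonneg hmbar.le hss)
    _ = c₁ * (s ⬝ᵥ (1 *ᵥ s)) := by rw [one_mulVec]; field_simp
    _ ≤ _ := hKv_le s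
  have he : c * (e ⬝ᵥ (Kp *ᵥ e)) ≤ e ⬝ᵥ (Q *ᵥ e) :=
    (mul_le_mul_of_nonneg_right (min_le_right _ _)
      (by simpa using hKp.dotProduct_mulVec_nonneg e)).trans (hQ_le e)
  have he' : 0 ≤ e' ⬝ᵥ (Kv *ᵥ e') := by simpa using hKv.posSemidef.dotProduct_mulVec_nonneg e'
  linarith [mul_add c (s ⬝ᵥ (M *ᵥ s)) (e ⬝ᵥ (Kp *ᵥ e))]

theorem exists_pos_mul_norm_sq_le_lyapunov [DecidableEq ι] {Kp : Matrix ι ι ℝ}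
    (hKp : Kp.PosDef) {m : ℝ} (hm : 0 < m) :
    ∃ c > 0, ∀ M : Matrix ι ι ℝ, (∀ v, m * (v ⬝ᵥ v) ≤ v ⬝ᵥ (M *ᵥ v)) → ∀ s e : ι → ℝ,
      c * ‖s‖ ^ 2 ≤ s ⬝ᵥ (M *ᵥ s) + e ⬝ᵥ (Kp *ᵥ e) ∧
        c * ‖e‖ ^ 2 ≤ s ⬝ᵥ (M *ᵥ s) + e ⬝ᵥ (Kp *ᵥ e) := by
  obtain ⟨c₁, hc₁, hs_le⟩ := (PosDef.one : (1 : Matrix ι ι ℝ).PosDef).exists_pos_mul_norm_sq_le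
  obtain ⟨c₂, hc₂, he_le⟩ := hKp.exists_pos_mul_norm_sq_le
  refine ⟨min (m * c₁) c₂, lt_min (mul_pos hm hc₁) hc₂, fun M hM s e => ?_⟩
  have hs : m * c₁ * ‖s‖ ^ 2 ≤ s ⬝ᵥ (M *ᵥ s) := by
    have := hs_le s
    rw [one_mulVec] at this
    nlinarith [hM s]
  have he := he_le e
  have hs_min := mul_le_mul_of_nonneg_right (min_le_left (m * c₁) c₂) (sq_nonneg ‖s‖)
  have he_min := mul_le_mul_of_nonneg_right (min_le_right (m * c₁) c₂) (sq_nonneg ‖e‖)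
  have hs_nonneg : 0 ≤ m * c₁ * ‖s‖ ^ 2 := by positivity
  have he_nonneg : 0 ≤ c₂ * ‖e‖ ^ 2 := by positivity
  constructor <;> linarith

theorem pd_tracking_global_asymptotic_stability_general
    (n : ℕ)
    (Kp Kv Δ : Matrix (Fin n) (Fin n) ℝ)
    (hKp : Kp.PosDef) (hKv : Kv.PosDef)
    (hΔ : Δ = Kv⁻¹ * Kp)
    (M M' C : ℝ → Matrix (Fin n) (Fin n) ℝ)
    (hMdiff : ∀ i j t, HasDerivAt (fun u => M u i j) (M' t i j) t)
    (hMsymm : ∀ t, (M t).IsSymm)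
    (m mbar : ℝ) (hm : 0 < m) (hmm : m ≤ mbar)
    (hMlow : ∀ (t : ℝ) (v : Fin n → ℝ), m * (v ⬝ᵥ v) ≤ v ⬝ᵥ (M t *ᵥ v))
    (hMhigh : ∀ (t : ℝ) (v : Fin n → ℝ), v ⬝ᵥ (M t *ᵥ v) ≤ mbar * (v ⬝ᵥ v))
    (hMC : ∀ t, M' t = C t + (C t)ᵀ)
    (e e' e'' : ℝ → Fin n → ℝ)
    (he : ∀ i t, HasDerivAt (fun u => e u i) (e' t i) t)
    (he' : ∀ i t, HasDerivAt (fun u => e' u i) (e'' t i) t)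
    (hloop : ∀ t, M t *ᵥ (e'' t + Δ *ᵥ e' t) + C t *ᵥ (e' t + Δ *ᵥ e t)
      + Kv *ᵥ e' t + Kp *ᵥ e t = 0) :
    Tendsto e atTop (nhds 0) ∧ Tendsto e' atTop (nhds 0) := by
  have hKvΔ : Kv * Δ = Kp := by
    rw [hΔ, mul_nonsing_inv_cancel_left _ _ ((isUnit_iff_isUnit_det _).1 hKv.isUnit)]
  have hQ : (Δᵀ * Kv * Δ).PosDef := by
    simpa using hKv.conjTranspose_mul_mul_same
      (hΔ ▸ mulVec_injective_of_isUnit (hKv.inv.isUnit.mul hKp.isUnit))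
  set s := fun t => e' t + Δ *ᵥ e t
  set V := fun t => s t ⬝ᵥ (M t *ᵥ s t) + e t ⬝ᵥ (Kp *ᵥ e t)
  have hV_deriv := hasDerivAt_closedLoop_lyapunov (isHermitian_iff_isSymm.1 hKp.isHermitian)
    (isHermitian_iff_isSymm.1 hKv.isHermitian) hKvΔ hMdiff hMsymm hMC he he' hloop
  obtain ⟨c, hc, hV_decay⟩ := exists_pos_mul_lyapunov_le hKp.posSemidef hKv hQ (hm.trans_le hmm)
  obtain ⟨c', hc', hV_ge⟩ := exists_pos_mul_norm_sq_le_lyapunov hKp hm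
  have hV_ge_t := fun t => hV_ge (M t) (hMlow t) (s t) (e t)
  have hV_lim : Tendsto V atTop (𝓝 0) :=
    tendsto_atTop_zero_of_hasDerivAt_le_neg_mul hc
      (fun t => (by positivity : 0 ≤ c' * ‖e t‖ ^ 2).trans (hV_ge_t t).2)
      hV_deriv fun t => neg_le_neg (hV_decay (M t) (hMhigh t) (e' t) (s t) (e t))
  have he_lim : Tendsto e atTop (𝓝 0) :=
    tendsto_zero_of_mul_norm_sq_le hc' (fun t => (hV_ge_t t).2) hV_lim
  have hs_lim : Tendsto s atTop (𝓝 0) :=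
    tendsto_zero_of_mul_norm_sq_le hc' (fun t => (hV_ge_t t).1) hV_lim
  have hΔe_lim : Tendsto (fun t => Δ *ᵥ e t) atTop (𝓝 0) :=
    ((continuous_const.matrix_mulVec continuous_id).tendsto' 0 0 (mulVec_zero Δ)).comp he_lim
  exact ⟨he_lim, by simpa [s] using hs_lim.sub hΔe_lim⟩

/-- Theorem 1 of the paper: the closed-loop error equation
`M(t)(e'' + Δ e') + C(t)(e' + Δ e) + Kv e' + Kp e = 0`, with `Kp`, `Kv`
symmetric positive definite, `Δ = Kv⁻¹ Kp`, `M` symmetric, uniformly positive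
definite and bounded (`m ‖v‖² ≤ vᵀ M(t) v ≤ m̄ ‖v‖²`), and `M' = C + Cᵀ`,
has its errors converge: `e(t) → 0` and `e'(t) → 0` as `t → ∞`;
the origin is globally asymptotically stable. -/
theorem pd_tracking_global_asymptotic_stability
    (n : ℕ) (hn : 0 < n)
    (Kp Kv Δ : Matrix (Fin n) (Fin n) ℝ)
    (hKp : Kp.PosDef) (hKv : Kv.PosDef)
    (hΔ : Δ = Kv⁻¹ * Kp)
    (M M' C : ℝ → Matrix (Fin n) (Fin n) ℝ)
    (hMdiff : ∀ i j t, HasDerivAt (fun u => M u i j) (M' t i j) t)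
    (hMsymm : ∀ t, (M t).IsSymm)
    (m mbar : ℝ) (hm : 0 < m) (hmm : m ≤ mbar)
    (hMlow : ∀ (t : ℝ) (v : Fin n → ℝ), m * (v ⬝ᵥ v) ≤ v ⬝ᵥ (M t *ᵥ v))
    (hMhigh : ∀ (t : ℝ) (v : Fin n → ℝ), v ⬝ᵥ (M t *ᵥ v) ≤ mbar * (v ⬝ᵥ v))
    (hMC : ∀ t, M' t = C t + (C t)ᵀ)
    (e e' e'' : ℝ → Fin n → ℝ)
    (he : ∀ i t, HasDerivAt (fun u => e u i) (e' t i) t)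
    (he' : ∀ i t, HasDerivAt (fun u => e' u i) (e'' t i) t)
    (hloop : ∀ t, M t *ᵥ (e'' t + Δ *ᵥ e' t) + C t *ᵥ (e' t + Δ *ᵥ e t)
      + Kv *ᵥ e' t + Kp *ᵥ e t = 0) :
    Tendsto e atTop (nhds 0) ∧ Tendsto e' atTop (nhds 0) :=
  pd_tracking_global_asymptotic_stability_general n Kp Kv Δ hKp hKv hΔ M M' C hMdiff hMsymm m mbar
    hm hmm hMlow hMhigh hMC e e' e'' he he' hloop
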